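/- arXiv:2005.08398 — 5 statements merged into one kernel-verified Lean document; each statement's English description precedes it below -/
import Mathlib

section
/- Let n, p, q, r, s be integers with n ≥ 2, p, q ≥ 2, r, s ≥ 2, gcd(p,q) = 1 and gcd(r,s) = 1. Then 1 − 6/(pq) = n·(1 − 6/(rs)) holds if and only if either (pq = 6 and rs = 6), or (n = 2, pq = 30 and rs = 10). -/
/-!
For coprime `p, q ≥ 2` we have `p ≠ q`, so `pq ≥ 6`, and checking the few products below `12`
leaves only `pq ∈ {6, 10}` there. Write `a = pq`, `b = rs`; the left side `1 - 6/a` lies in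
`[0, 1)`. If `b ≥ 12` the right side is at least `2 · 1/2 = 1`; if `b = 6` it vanishes, forcing
`a = 6`; if `b = 10` it equals `2n/5`, which is below `1` only for `n = 2`, and then `a = 30`.
-/

lemma Int.ne_of_isCoprime_of_two_le {p q : ℤ} (hp : 2 ≤ p) (h : IsCoprime p q) : p ≠ q := by
  rintro rfl
  rcases Int.isUnit_iff.mp (isCoprime_self.mp h) with h1 | h1 <;> omega

lemma Int.six_le_mul_of_isCoprime {p q : ℤ} (hp : 2 ≤ p) (hq : 2 ≤ q) (h : IsCoprime p q) :
    6 ≤ p * q := by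
  rcases (Int.ne_of_isCoprime_of_two_le hp h).lt_or_gt with hlt | hlt <;> nlinarith

lemma Int.mul_eq_six_or_eq_ten_or_twelve_le_of_isCoprime {p q : ℤ} (hp : 2 ≤ p) (hq : 2 ≤ q)
    (h : IsCoprime p q) : p * q = 6 ∨ p * q = 10 ∨ 12 ≤ p * q := by
  by_contra! hsmall
  have hp5 : p ≤ 5 := by nlinarith
  have hq5 : q ≤ 5 := by nlinarith
  rw [Int.isCoprime_iff_gcd_eq_one] at h
  interval_cases p <;> interval_cases q <;> revert h hsmall <;> decide

lemma one_sub_six_div_eq_mul_iff {a b n : ℤ} (ha : 6 ≤ a) (hb : b = 6 ∨ b = 10 ∨ 12 ≤ b)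
    (hn : 2 ≤ n) :
    1 - 6 / (a : ℚ) = n * (1 - 6 / (b : ℚ)) ↔ (a = 6 ∧ b = 6) ∨ (n = 2 ∧ a = 30 ∧ b = 10) := by
  refine ⟨fun h => ?_, by rintro (⟨rfl, rfl⟩ | ⟨rfl, rfl, rfl⟩) <;> norm_num⟩
  have ha₀ : (0 : ℚ) < a := by exact_mod_cast (by omega : 0 < a)
  have hlt : 1 - 6 / (a : ℚ) < 1 := by linarith [div_pos (by norm_num : (0 : ℚ) < 6) ha₀]
  rcases hb with rfl | rfl | hb
  · have h6a : 6 / (a : ℚ) = 1 := by push_cast at h; linarith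
    exact .inl ⟨by exact_mod_cast ((div_eq_one_iff_eq ha₀.ne').mp h6a).symm, rfl⟩
  · have hn2 : n = 2 := by
      have : (n : ℚ) < 3 := by push_cast at h; linarith
      have : n < 3 := by exact_mod_cast this
      omega
    subst hn2
    have h6a : 6 / (a : ℚ) = 1 / 5 := by push_cast at h; linarith
    have : (a : ℚ) = 30 := by field_simp at h6a; linarith
    exact .inr ⟨rfl, by exact_mod_cast this, rfl⟩
  · exfalso
    have hb' : (12 : ℚ) ≤ b := by exact_mod_cast hb
    have hn' : (2 : ℚ) ≤ n := by exact_mod_cast hn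
    have : 6 / (b : ℚ) ≤ 1 / 2 := by rw [div_le_iff₀ (by linarith)]; linarith
    nlinarith

/-- For integers `n ≥ 2`, `p, q ≥ 2`, `r, s ≥ 2` with `gcd(p,q) = 1` and
`gcd(r,s) = 1`, the equation `1 - 6/(pq) = n * (1 - 6/(rs))` holds if and only if
either (`pq = 6` and `rs = 6`), or (`n = 2`, `pq = 30` and `rs = 10`). -/
theorem virasoro_character_growth_classification
    (n p q r s : ℤ) (hn : 2 ≤ n) (hp : 2 ≤ p) (hq : 2 ≤ q) (hr : 2 ≤ r) (hs : 2 ≤ s)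
    (hpq : IsCoprime p q) (hrs : IsCoprime r s) :
    (1 - 6 / ((p : ℚ) * q) = (n : ℚ) * (1 - 6 / ((r : ℚ) * s))) ↔
      ((p * q = 6 ∧ r * s = 6) ∨ (n = 2 ∧ p * q = 30 ∧ r * s = 10)) := by
  simpa only [Int.cast_mul] using
    one_sub_six_div_eq_mul_iff (Int.six_le_mul_of_isCoprime hp hq hpq)
      (Int.mul_eq_six_or_eq_ten_or_twelve_le_of_isCoprime hr hs hrs) hn
end

section
/- Let n, p, q, r, s be integers with n ≥ 2, p, q ≥ 2, r, s ≥ 2, gcd(p,q) = 1 and gcd(r,s) = 1. Then the two equations 1 − 6/(pq) = n·(1 − 6/(rs)) and 1 − 6(p−q)²/(pq) = n·(1 − 6(r−s)²/(rs)) hold simultaneously if and only if either ({p,q} = {2,3} and {r,s} = {2,3}, with n arbitrary), or (n = 2, {p,q} = {3,10} and {r,s} = {2,5}). -/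
/-!
Coprime `r, s ≥ 2` have `rs ≥ 6`, so `1 - 6/(rs) ≥ 0`; since `1 - 6/(pq) < 1` and `n ≥ 2`,
in fact `1 - 6/(rs) < 1/2`, i.e. `rs < 12`, which leaves `{r, s} = {2, 3}` or `{2, 5}`. In both
cases the two equations prescribe `pq` and `(p - q)²`, hence `p + q`, and therefore `{p, q}`;
for `{2, 5}` the inequality `n · 2/5 < 1` also forces `n = 2`.
-/

theorem Finset.pair_eq_pair_iff {α : Type*} [DecidableEq α] {a b c d : α} :
    ({a, b} : Finset α) = {c, d} ↔ a = c ∧ b = d ∨ a = d ∧ b = c := by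
  rw [← Finset.coe_inj, Finset.coe_pair, Finset.coe_pair, Set.pair_eq_pair_iff]

theorem pair_eq_of_mul_eq_of_sub_sq_eq {R : Type*} [CommRing R] [LinearOrder R]
    [IsStrictOrderedRing R] {p q a b : R} (hp : 0 ≤ p) (hq : 0 ≤ q) (ha : 0 ≤ a)
    (hb : 0 ≤ b) (hmul : p * q = a * b) (hsub : (p - q) ^ 2 = (a - b) ^ 2) :
    ({p, q} : Finset R) = {a, b} := by
  have hsum : p + q = a + b := by
    have : (p + q) ^ 2 = (a + b) ^ 2 := by linear_combination hsub + 4 * hmul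
    exact (pow_left_inj₀ (by positivity) (by positivity) two_ne_zero).1 this
  -- `p` is a root of `(X - a) * (X - b) = X ^ 2 - (p + q) * X + p * q`.
  have hroot : (p - a) * (p - b) = 0 := by linear_combination p * hsum - hmul
  rw [Finset.pair_eq_pair_iff]
  rcases mul_eq_zero.1 hroot with h | h
  · exact .inl ⟨by linear_combination h, by linear_combination hsum - h⟩
  · exact .inr ⟨by linear_combination h, by linear_combination hsum - h⟩

namespace MinimalModel

def centralCharge (p q : ℤ) : ℚ := 1 - 6 * ((p : ℚ) - q) ^ 2 / ((p : ℚ) * q)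

-- Its value governs the growth of the characters of the minimal model.
def effectiveCentralCharge (p q : ℤ) : ℚ := 1 - 6 / ((p : ℚ) * q)

theorem centralCharge_comm (p q : ℤ) : centralCharge p q = centralCharge q p := by
  unfold centralCharge; ring

theorem effectiveCentralCharge_comm (p q : ℤ) :
    effectiveCentralCharge p q = effectiveCentralCharge q p := by
  unfold effectiveCentralCharge; ring

theorem charges_eq_of_pair_eq {p q a b : ℤ} (h : ({p, q} : Finset ℤ) = {a, b}) :
    effectiveCentralCharge p q = effectiveCentralCharge a b ∧
      centralCharge p q = centralCharge a b := by
  rcases Finset.pair_eq_pair_iff.1 h with ⟨rfl, rfl⟩ | ⟨rfl, rfl⟩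
  · exact ⟨rfl, rfl⟩
  · exact ⟨effectiveCentralCharge_comm _ _, centralCharge_comm _ _⟩

theorem effectiveCentralCharge_lt_one {p q : ℤ} (h : 0 < p * q) :
    effectiveCentralCharge p q < 1 := by
  have : (0 : ℚ) < p * q := by exact_mod_cast h
  unfold effectiveCentralCharge
  linarith [div_pos (by norm_num : (0 : ℚ) < 6) this]

theorem mul_eq_of_effectiveCentralCharge_eq {p q a b : ℤ} (hpq : p * q ≠ 0) (hab : a * b ≠ 0)
    (h : effectiveCentralCharge p q = effectiveCentralCharge a b) : p * q = a * b := by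
  have hpq' : (p : ℚ) * q ≠ 0 := by exact_mod_cast hpq
  have hab' : (a : ℚ) * b ≠ 0 := by exact_mod_cast hab
  unfold effectiveCentralCharge at h
  have := (div_eq_div_iff hpq' hab').1 (by linarith : (6 : ℚ) / (p * q) = 6 / (a * b))
  exact_mod_cast (by linarith : (a : ℚ) * b = p * q).symm

theorem sub_sq_eq_of_centralCharge_eq {p q a b : ℤ} (hab : a * b ≠ 0) (hmul : p * q = a * b)
    (h : centralCharge p q = centralCharge a b) : (p - q) ^ 2 = (a - b) ^ 2 := by
  have hab' : (a : ℚ) * b ≠ 0 := by exact_mod_cast hab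
  have hmul' : (p : ℚ) * q = a * b := by exact_mod_cast hmul
  unfold centralCharge at h
  rw [hmul'] at h
  have := (div_left_inj' hab').1 (by linarith :
    6 * ((p : ℚ) - q) ^ 2 / (a * b) = 6 * ((a : ℚ) - b) ^ 2 / (a * b))
  exact_mod_cast (by linarith : ((p : ℚ) - q) ^ 2 = (a - b) ^ 2)

theorem pair_eq_of_charges_eq {p q a b : ℤ} (hp : 0 < p) (hq : 0 < q) (ha : 0 < a) (hb : 0 < b)
    (heff : effectiveCentralCharge p q = effectiveCentralCharge a b)
    (hc : centralCharge p q = centralCharge a b) : ({p, q} : Finset ℤ) = {a, b} := by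
  have hab : a * b ≠ 0 := (mul_pos ha hb).ne'
  have hmul := mul_eq_of_effectiveCentralCharge_eq (mul_pos hp hq).ne' hab heff
  exact pair_eq_of_mul_eq_of_sub_sq_eq hp.le hq.le ha.le hb.le hmul
    (sub_sq_eq_of_centralCharge_eq hab hmul hc)

theorem six_le_mul_of_isCoprime {r s : ℤ} (hr : 2 ≤ r) (hs : 2 ≤ s) (h : IsCoprime r s) :
    6 ≤ r * s := by
  by_contra! hlt
  obtain rfl : r = 2 := by nlinarith
  obtain rfl : s = 2 := by nlinarith
  exact absurd (Int.isCoprime_iff_gcd_eq_one.1 h) (by decide)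

theorem mul_lt_twelve_of_effectiveCentralCharge_eq {n p q r s : ℤ} (hn : 2 ≤ n)
    (hpq : 0 < p * q) (hrs : 6 ≤ r * s)
    (h : effectiveCentralCharge p q = n * effectiveCentralCharge r s) : r * s < 12 := by
  have hrs' : (6 : ℚ) ≤ r * s := by exact_mod_cast hrs
  have hn' : (2 : ℚ) ≤ n := by exact_mod_cast hn
  have hnonneg : 0 ≤ effectiveCentralCharge r s := by
    unfold effectiveCentralCharge
    linarith [(div_le_one (by linarith)).2 hrs']
  have hhalf : effectiveCentralCharge r s < 1 / 2 := by
    nlinarith [effectiveCentralCharge_lt_one hpq]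
  unfold effectiveCentralCharge at hhalf
  have := (lt_div_iff₀ (by linarith : (0 : ℚ) < r * s)).1
    (by linarith : (1 : ℚ) / 2 < 6 / (r * s))
  exact_mod_cast (by linarith : (r : ℚ) * s < 12)

theorem pair_eq_of_isCoprime_of_mul_lt_twelve {r s : ℤ} (hr : 2 ≤ r) (hs : 2 ≤ s)
    (h : IsCoprime r s) (hlt : r * s < 12) :
    ({r, s} : Finset ℤ) = {2, 3} ∨ ({r, s} : Finset ℤ) = {2, 5} := by
  have hr' : r ≤ 5 := by nlinarith
  have hs' : s ≤ 5 := by nlinarith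
  rw [Int.isCoprime_iff_gcd_eq_one] at h
  interval_cases r <;> interval_cases s <;> first | omega | decide | (revert h; decide)

end MinimalModel

open MinimalModel

theorem conformal_embedding_simple_classification_general
    (n p q r s : ℤ) (hn : 2 ≤ n) (hp : 2 ≤ p) (hq : 2 ≤ q) (hr : 2 ≤ r) (hs : 2 ≤ s)
    (hrs : IsCoprime r s) :
    ((1 - 6 / ((p : ℚ) * q) = (n : ℚ) * (1 - 6 / ((r : ℚ) * s))) ∧
      (1 - 6 * ((p : ℚ) - q) ^ 2 / ((p : ℚ) * q) =
        (n : ℚ) * (1 - 6 * ((r : ℚ) - s) ^ 2 / ((r : ℚ) * s)))) ↔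
      ((({p, q} : Finset ℤ) = {2, 3} ∧ ({r, s} : Finset ℤ) = {2, 3}) ∨
        (n = 2 ∧ ({p, q} : Finset ℤ) = {3, 10} ∧ ({r, s} : Finset ℤ) = {2, 5})) := by
  change effectiveCentralCharge p q = n * effectiveCentralCharge r s ∧
    centralCharge p q = n * centralCharge r s ↔ _
  constructor
  · rintro ⟨heff, hc⟩
    have hpq : 0 < p * q := by positivity
    rcases pair_eq_of_isCoprime_of_mul_lt_twelve hr hs hrs
      (mul_lt_twelve_of_effectiveCentralCharge_eq hn hpq (six_le_mul_of_isCoprime hr hs hrs) heff)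
      with h23 | h25
    · obtain ⟨heff23, hc23⟩ := charges_eq_of_pair_eq h23
      refine .inl ⟨pair_eq_of_charges_eq (by omega) (by omega) (by norm_num) (by norm_num)
        ?_ ?_, h23⟩
      · rw [heff, heff23]; norm_num [effectiveCentralCharge]
      · rw [hc, hc23]; norm_num [centralCharge]
    · obtain ⟨heff25, hc25⟩ := charges_eq_of_pair_eq h25
      have hn2 : n = 2 := by
        have := effectiveCentralCharge_lt_one hpq
        rw [heff, heff25] at this
        norm_num [effectiveCentralCharge] at this
        have : n < 3 := by exact_mod_cast (by linarith : (n : ℚ) < 3)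
        omega
      subst hn2
      refine .inr ⟨rfl, pair_eq_of_charges_eq (by omega) (by omega) (by norm_num) (by norm_num)
        ?_ ?_, h25⟩
      · rw [heff, heff25]; norm_num [effectiveCentralCharge]
      · rw [hc, hc25]; norm_num [centralCharge]
  · rintro (⟨hpq_pair, hrs_pair⟩ | ⟨rfl, hpq_pair, hrs_pair⟩) <;>
      rw [(charges_eq_of_pair_eq hpq_pair).1, (charges_eq_of_pair_eq hpq_pair).2,
        (charges_eq_of_pair_eq hrs_pair).1, (charges_eq_of_pair_eq hrs_pair).2] <;>
      norm_num [effectiveCentralCharge, centralCharge]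

/-- For integers `n ≥ 2`, `p, q ≥ 2`, `r, s ≥ 2` with `gcd(p,q) = 1` and
`gcd(r,s) = 1`, the two equations `1 - 6/(pq) = n(1 - 6/(rs))` (growth of characters) and
`1 - 6(p-q)²/(pq) = n(1 - 6(r-s)²/(rs))` (equality of central charges) hold simultaneously
if and only if either `{p,q} = {2,3}` and `{r,s} = {2,3}` (with `n` arbitrary), or
`n = 2`, `{p,q} = {3,10}` and `{r,s} = {2,5}`. -/
theorem conformal_embedding_simple_classification
    (n p q r s : ℤ) (hn : 2 ≤ n) (hp : 2 ≤ p) (hq : 2 ≤ q) (hr : 2 ≤ r) (hs : 2 ≤ s)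
    (hpq : IsCoprime p q) (hrs : IsCoprime r s) :
    ((1 - 6 / ((p : ℚ) * q) = (n : ℚ) * (1 - 6 / ((r : ℚ) * s))) ∧
      (1 - 6 * ((p : ℚ) - q) ^ 2 / ((p : ℚ) * q) =
        (n : ℚ) * (1 - 6 * ((r : ℚ) - s) ^ 2 / ((r : ℚ) * s)))) ↔
      ((({p, q} : Finset ℤ) = {2, 3} ∧ ({r, s} : Finset ℤ) = {2, 3}) ∨
        (n = 2 ∧ ({p, q} : Finset ℤ) = {3, 10} ∧ ({r, s} : Finset ℤ) = {2, 5})) :=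
  conformal_embedding_simple_classification_general n p q r s hn hp hq hr hs hrs
end

section
/- There are infinitely many positive rational numbers t such that 9 + 78t − 137t² + 78t³ + 9t⁴ is the square of a rational number. -/
/-!
Writing `Q(t) = 9 + 78t - 137t² + 78t³ + 9t⁴`, one has the identity
`Q(t) - ((x t² - 78t - 18) / 6)² = -(t² / 36) · ((x² - 324) t² - 156 (x + 18) t - 36 (x - 306))`,
and the quadratic in `t` on the right has discriminant `144 (x + 18) (x² - 155x + 8550)`.
So every rational point `(x, y)` of the elliptic curve `y² = (x + 18)(x² - 155x + 8550)` yields the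
rational values `t = 6 (±y + 13x + 234) / (x² - 324)` at which `Q` is a square, and a sign
analysis shows that one of them is positive.

To produce infinitely many points, start from `(1233/16, 31473/64)` (twice `(225, 2430)`), where
`|x|₂ = 4^k` and `|y|₂ = 8^k` with `k = 2`. Doubling on any curve `y² = x³ + a x² + b x + c` with
2-integral `a`, `b` raises `k` by one, and at such a point `|t|₂ = 2^-(k+1)`, so the values of `t` are pairwise
distinct.
-/

section padicNorm

variable {p : ℕ} [Fact p.Prime]

theorem padicNorm_add_eq_left {q r : ℚ} (h : padicNorm p r < padicNorm p q) :
    padicNorm p (q + r) = padicNorm p q := by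
  rw [padicNorm.add_eq_max_of_ne h.ne', max_eq_left h.le]

theorem padicNorm_sub_eq_left {q r : ℚ} (h : padicNorm p r < padicNorm p q) :
    padicNorm p (q - r) = padicNorm p q := by
  rw [sub_eq_add_neg, padicNorm_add_eq_left (by rwa [padicNorm.neg])]

theorem padicNorm_ofNat_le_one (n : ℕ) [n.AtLeastTwo] : padicNorm p (ofNat(n) : ℚ) ≤ 1 := by
  exact_mod_cast padicNorm.of_nat n

theorem padicNorm_mul_le_of_le_one {q r : ℚ} (hq : padicNorm p q ≤ 1) :
    padicNorm p (q * r) ≤ padicNorm p r := by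
  rw [padicNorm.mul]
  exact mul_le_of_le_one_left (padicNorm.nonneg r) hq

theorem padicNorm_natCast_div_pow {m : ℕ} (hm : ¬p ∣ m) (k : ℕ) :
    padicNorm p (m / (p : ℚ) ^ k) = (p : ℚ) ^ k := by
  rw [padicNorm.div, (padicNorm.nat_eq_one_iff m).mpr hm, IsAbsoluteValue.abv_pow (padicNorm p),
    padicNorm.padicNorm_p_of_prime, inv_pow, one_div, inv_inv]

end padicNorm

theorem padicNorm_two_two : padicNorm 2 2 = 2⁻¹ := by
  exact_mod_cast padicNorm.padicNorm_p_of_prime (p := 2)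

theorem padicNorm_two_three : padicNorm 2 3 = 1 := by
  exact_mod_cast (padicNorm.nat_eq_one_iff (p := 2) 3).mpr (by decide)

theorem padicNorm_two_six : padicNorm 2 6 = 2⁻¹ := by
  rw [show (6 : ℚ) = 2 * 3 by norm_num, padicNorm.mul, padicNorm_two_two, padicNorm_two_three,
    mul_one]

namespace WeierstrassCurve.Affine

variable {F : Type*} [Field F] [DecidableEq F]

def double (W : Affine F) (P : F × F) : F × F :=
  (W.addX P.1 P.1 (W.slope P.1 P.1 P.2 P.2), W.addY P.1 P.1 P.2 (W.slope P.1 P.1 P.2 P.2))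

theorem equation_double {W : Affine F} {P : F × F} (hP : W.Equation P.1 P.2)
    (hy : P.2 ≠ W.negY P.1 P.2) : W.Equation (W.double P).1 (W.double P).2 :=
  equation_add hP hP fun h => hy h.2

end WeierstrassCurve.Affine

def HasTwoAdicLevel (k : ℕ) (P : ℚ × ℚ) : Prop :=
  padicNorm 2 P.1 = 2 ^ (2 * k) ∧ padicNorm 2 P.2 = 2 ^ (3 * k)

namespace HasTwoAdicLevel

variable {k : ℕ} {P : ℚ × ℚ}

theorem snd_ne_zero (hP : HasTwoAdicLevel k P) : P.2 ≠ 0 := by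
  intro h
  have := hP.2
  rw [h, padicNorm.zero] at this
  exact (pow_pos two_pos _).ne this

theorem padicNorm_fst_sq_sub (hk : 1 ≤ k) (hP : HasTwoAdicLevel k P) :
    padicNorm 2 (P.1 ^ 2 - 324) = 2 ^ (4 * k) := by
  have hx2 : padicNorm 2 (P.1 ^ 2) = 2 ^ (4 * k) := by
    rw [IsAbsoluteValue.abv_pow (padicNorm 2), hP.1]; ring
  have h324 : padicNorm 2 324 < padicNorm 2 (P.1 ^ 2) :=
    hx2 ▸ (padicNorm_ofNat_le_one 324).trans_lt (one_lt_pow₀ one_lt_two (by omega))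
  rw [padicNorm_sub_eq_left h324, hx2]

variable {W : WeierstrassCurve ℚ}

theorem double (ha₁ : W.a₁ = 0) (ha₃ : W.a₃ = 0) (ha₂ : padicNorm 2 W.a₂ ≤ 1)
    (ha₄ : padicNorm 2 W.a₄ ≤ 1) (hk : 1 ≤ k) (hP : HasTwoAdicLevel k P) :
    HasTwoAdicLevel (k + 1) (W.toAffine.double P) := by
  obtain ⟨x, y⟩ := P
  have hx : padicNorm 2 x = 2 ^ (2 * k) := hP.1
  have hy : padicNorm 2 y = 2 ^ (3 * k) := hP.2
  set ℓ := W.toAffine.slope x x y y with hℓ_def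
  have hℓ_eq : ℓ = (3 * x ^ 2 + (2 * W.a₂ * x + W.a₄)) / (2 * y) := by
    rw [hℓ_def, WeierstrassCurve.Affine.slope_of_Y_ne rfl] <;>
      simp only [WeierstrassCurve.Affine.negY, ha₁, ha₃, zero_mul, sub_zero]
    · ring
    · exact fun h => hP.snd_ne_zero (by linarith)
  have hℓ : padicNorm 2 ℓ = 2 ^ (k + 1) := by
    have hx2 : padicNorm 2 (3 * x ^ 2) = 2 ^ (4 * k) := by
      rw [padicNorm.mul, padicNorm_two_three, IsAbsoluteValue.abv_pow (padicNorm 2), hx]; ring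
    have hsmall : padicNorm 2 (2 * W.a₂ * x + W.a₄) < padicNorm 2 (3 * x ^ 2) := by
      rw [hx2, mul_assoc]
      refine padicNorm.nonarchimedean.trans_lt (max_lt ?_ ?_)
      · calc padicNorm 2 (2 * (W.a₂ * x)) ≤ padicNorm 2 x :=
              (padicNorm_mul_le_of_le_one (padicNorm_ofNat_le_one 2)).trans
                (padicNorm_mul_le_of_le_one ha₂)
          _ < 2 ^ (4 * k) := hx ▸ pow_lt_pow_right₀ one_lt_two (by omega)
      · exact ha₄.trans_lt (one_lt_pow₀ one_lt_two (by omega))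
    rw [hℓ_eq, padicNorm.div, padicNorm_add_eq_left hsmall, hx2, padicNorm.mul, padicNorm_two_two,
      hy]
    field_simp
    ring
  have hX : padicNorm 2 (W.toAffine.addX x x ℓ) = 2 ^ (2 * (k + 1)) := by
    have hℓ2 : padicNorm 2 (ℓ ^ 2) = 2 ^ (2 * (k + 1)) := by
      rw [IsAbsoluteValue.abv_pow (padicNorm 2), hℓ]; ring
    have hsmall : padicNorm 2 (W.a₂ + x + x) < padicNorm 2 (ℓ ^ 2) := by
      have hxℓ : padicNorm 2 x < padicNorm 2 (ℓ ^ 2) :=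
        hx ▸ hℓ2 ▸ pow_lt_pow_right₀ one_lt_two (by omega)
      refine padicNorm.nonarchimedean.trans_lt (max_lt ?_ hxℓ)
      refine padicNorm.nonarchimedean.trans_lt (max_lt ?_ hxℓ)
      exact hℓ2 ▸ ha₂.trans_lt (one_lt_pow₀ one_lt_two (by omega))
    rw [WeierstrassCurve.Affine.addX, ha₁, show ℓ ^ 2 + 0 * ℓ - W.a₂ - x - x =
      ℓ ^ 2 - (W.a₂ + x + x) by ring, padicNorm_sub_eq_left hsmall, hℓ2]
  refine ⟨hX, ?_⟩
  have hXx : padicNorm 2 (W.toAffine.addX x x ℓ - x) = 2 ^ (2 * (k + 1)) := by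
    rw [padicNorm_sub_eq_left (hX ▸ hx ▸ pow_lt_pow_right₀ one_lt_two (by omega)), hX]
  have hℓXx : padicNorm 2 (ℓ * (W.toAffine.addX x x ℓ - x)) = 2 ^ (3 * (k + 1)) := by
    rw [padicNorm.mul, hℓ, hXx]; ring
  change padicNorm 2 (W.toAffine.addY x x y ℓ) = _
  rw [WeierstrassCurve.Affine.addY, WeierstrassCurve.Affine.negY,
    WeierstrassCurve.Affine.negAddY, ha₁, ha₃, zero_mul, sub_zero, sub_zero, padicNorm.neg,
    padicNorm_add_eq_left (hℓXx ▸ hy ▸ pow_lt_pow_right₀ one_lt_two (by omega)), hℓXx]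

theorem iterate_double (ha₁ : W.a₁ = 0) (ha₃ : W.a₃ = 0) (ha₂ : padicNorm 2 W.a₂ ≤ 1)
    (ha₄ : padicNorm 2 W.a₄ ≤ 1) (hk : 1 ≤ k) (hP : HasTwoAdicLevel k P)
    (hW : W.toAffine.Equation P.1 P.2) (n : ℕ) :
    HasTwoAdicLevel (k + n) (W.toAffine.double^[n] P) ∧
      W.toAffine.Equation (W.toAffine.double^[n] P).1 (W.toAffine.double^[n] P).2 := by
  induction n with
  | zero => exact ⟨hP, hW⟩
  | succ n ih =>
    obtain ⟨hPn, hWn⟩ := ih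
    rw [Function.iterate_succ_apply']
    refine ⟨hPn.double ha₁ ha₃ ha₂ ha₄ (hk.trans (Nat.le_add_right k n)), WeierstrassCurve.Affine.equation_double hWn ?_⟩
    simp only [WeierstrassCurve.Affine.negY, ha₁, ha₃, zero_mul, sub_zero]
    exact fun h => hPn.snd_ne_zero (by linarith)

end HasTwoAdicLevel

def quarticCurve : WeierstrassCurve ℚ := ⟨0, -137, 0, 5760, 153900⟩

theorem quarticCurve_equation_iff (x y : ℚ) :
    quarticCurve.toAffine.Equation x y ↔ y ^ 2 = (x + 18) * (x ^ 2 - 155 * x + 8550) := by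
  rw [WeierstrassCurve.Affine.equation_iff]
  simp only [quarticCurve, zero_mul, add_zero]
  constructor <;> intro h <;> linear_combination h

def tCoord (x y : ℚ) : ℚ := 6 * (y + 13 * x + 234) / (x ^ 2 - 324)

theorem quartic_eq_sq_sub (x t : ℚ) :
    9 + 78 * t - 137 * t ^ 2 + 78 * t ^ 3 + 9 * t ^ 4 = ((x * t ^ 2 - 78 * t - 18) / 6) ^ 2
      - t ^ 2 / 36 * ((x ^ 2 - 324) * (t * t) + -(156 * (x + 18)) * t + -(36 * (x - 306))) := by
  ring

theorem quartic_tCoord_eq_sq {x y : ℚ} (hxy : y ^ 2 = (x + 18) * (x ^ 2 - 155 * x + 8550))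
    (hx : x ^ 2 ≠ 324) :
    let t := tCoord x y
    9 + 78 * t - 137 * t ^ 2 + 78 * t ^ 3 + 9 * t ^ 4 = ((x * t ^ 2 - 78 * t - 18) / 6) ^ 2 := by
  intro t
  have hd : x ^ 2 - 324 ≠ 0 := sub_ne_zero.mpr hx
  have hdiscrim : discrim (x ^ 2 - 324) (-(156 * (x + 18))) (-(36 * (x - 306))) =
      (12 * y) * (12 * y) := by
    rw [discrim]; linear_combination (-144) * hxy
  have hroot := (quadratic_eq_zero_iff hd hdiscrim t).mpr
    (.inl (by simp only [t, tCoord]; field_simp; ring))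
  rw [quartic_eq_sq_sub x, hroot, mul_zero, sub_zero]

theorem tCoord_pos_or_tCoord_neg_pos {x y : ℚ}
    (hxy : y ^ 2 = (x + 18) * (x ^ 2 - 155 * x + 8550)) (hx : x ^ 2 ≠ 324) :
    0 < tCoord x y ∨ 0 < tCoord x (-y) := by
  have hquad : 0 < x ^ 2 - 155 * x + 8550 := by nlinarith [sq_nonneg (2 * x - 155)]
  have hx18 : -18 < x := by
    by_contra! h
    have : x + 18 < 0 := lt_of_le_of_ne (by linarith) fun h' => hx (by nlinarith)
    nlinarith [sq_nonneg y]
  suffices 0 < tCoord x |y| ∨ 0 < tCoord x (-|y|) by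
    rcases abs_choice y with h | h <;> rw [h] at this
    exacts [this, by rwa [neg_neg, or_comm] at this]
  rcases lt_or_gt_of_ne (sub_ne_zero.mpr hx) with hd | hd
  · refine .inr (div_pos_of_neg_of_neg ?_ hd)
    have : (13 * x + 234) ^ 2 < |y| ^ 2 := by rw [sq_abs]; nlinarith
    nlinarith [abs_nonneg y]
  · exact .inl (div_pos (by nlinarith [abs_nonneg y]) hd)

theorem padicNorm_tCoord {k : ℕ} (hk : 1 ≤ k) {x y : ℚ} (hP : HasTwoAdicLevel k (x, y)) :
    padicNorm 2 (tCoord x y) = (2 ^ (k + 1))⁻¹ := by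
  have hx : padicNorm 2 x = 2 ^ (2 * k) := hP.1
  have hy : padicNorm 2 y = 2 ^ (3 * k) := hP.2
  have hsmall : padicNorm 2 (13 * x + 234) < padicNorm 2 y := by
    rw [hy]
    refine padicNorm.nonarchimedean.trans_lt (max_lt ?_ ?_)
    · calc padicNorm 2 (13 * x) ≤ padicNorm 2 x :=
            padicNorm_mul_le_of_le_one (padicNorm_ofNat_le_one 13)
        _ < 2 ^ (3 * k) := hx ▸ pow_lt_pow_right₀ one_lt_two (by omega)
    · exact (padicNorm_ofNat_le_one 234).trans_lt (one_lt_pow₀ one_lt_two (by omega))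
  rw [tCoord, padicNorm.div, padicNorm.mul, padicNorm_two_six, add_assoc,
    padicNorm_add_eq_left hsmall, hP.padicNorm_fst_sq_sub hk, hy]
  field_simp
  ring

theorem exists_pos_quartic_eq_sq_of_hasTwoAdicLevel {k : ℕ} (hk : 1 ≤ k) {P : ℚ × ℚ}
    (hP : HasTwoAdicLevel k P) (hE : quarticCurve.toAffine.Equation P.1 P.2) :
    ∃ t : ℚ, (0 < t ∧ ∃ u : ℚ, 9 + 78 * t - 137 * t ^ 2 + 78 * t ^ 3 + 9 * t ^ 4 = u ^ 2) ∧
      padicNorm 2 t = (2 ^ (k + 1))⁻¹ := by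
  obtain ⟨x, y⟩ := P
  rw [quarticCurve_equation_iff] at hE
  have hx : x ^ 2 ≠ 324 := fun h => by
    have := hP.padicNorm_fst_sq_sub hk
    rw [show x ^ 2 - 324 = 0 by simp [h], padicNorm.zero] at this
    exact (pow_pos two_pos _).ne this
  have hP' : HasTwoAdicLevel k (x, -y) := ⟨hP.1, (padicNorm.neg y).trans hP.2⟩
  rcases tCoord_pos_or_tCoord_neg_pos hE hx with h | h
  · exact ⟨_, ⟨h, _, quartic_tCoord_eq_sq hE hx⟩, padicNorm_tCoord hk hP⟩
  · exact ⟨_, ⟨h, _, quartic_tCoord_eq_sq (by rwa [neg_sq]) hx⟩, padicNorm_tCoord hk hP'⟩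

/-- There are infinitely many positive rationals `t` such that
`9 + 78t - 137t² + 78t³ + 9t⁴` is the square of a rational number. -/
theorem infinitely_many_square_values_quartic_n3 :
    {t : ℚ | 0 < t ∧ ∃ u : ℚ, 9 + 78 * t - 137 * t ^ 2 + 78 * t ^ 3 + 9 * t ^ 4
      = u ^ 2}.Infinite := by
  have ha₂ : padicNorm 2 quarticCurve.a₂ ≤ 1 := by
    rw [quarticCurve, padicNorm.neg]; exact padicNorm_ofNat_le_one 137
  have hbase : HasTwoAdicLevel 2 (1233 / 16, 31473 / 64) :=
    ⟨by exact_mod_cast padicNorm_natCast_div_pow (p := 2) (m := 1233) (by decide) 4,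
      by exact_mod_cast padicNorm_natCast_div_pow (p := 2) (m := 31473) (by decide) 6⟩
  have hE : quarticCurve.toAffine.Equation (1233 / 16) (31473 / 64) := by
    rw [quarticCurve_equation_iff]; norm_num
  have ht (n : ℕ) : ∃ t : ℚ,
      (0 < t ∧ ∃ u : ℚ, 9 + 78 * t - 137 * t ^ 2 + 78 * t ^ 3 + 9 * t ^ 4 = u ^ 2) ∧
        padicNorm 2 t = (2 ^ (2 + n + 1))⁻¹ :=
    have ⟨hPn, hEn⟩ := hbase.iterate_double rfl rfl ha₂ (padicNorm_ofNat_le_one 5760)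
      (by norm_num) hE n
    exists_pos_quartic_eq_sq_of_hasTwoAdicLevel (by omega) hPn hEn
  choose t ht_mem ht_norm using ht
  refine Set.infinite_of_injective_forall_mem (fun m n hmn => ?_) ht_mem
  have := inv_injective ((ht_norm m).symm.trans (hmn ▸ ht_norm n))
  simpa using pow_right_injective₀ two_pos (by norm_num) this
end

section
/- For every even integer a ≥ 2 and every complex number c, the two complex numbers p₁(a,c) = a⁵(7c−16) + 5a⁴(13c−64) + 15a³(9c−88) + a²(560−185c) − 106a(7c−76) − 480c + 7440 and p₂(a,c) = a⁵(13c−40) + a⁴(70c−556) + 25a³(5c−68) + 40a²(2c−23) + 12a(c+70) − 144 are not both zero. -/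
/-! Both `p₁` and `p₂` are linear in `c`, so eliminating `c` between them leaves their
resultant, a polynomial of degree `10` in `a` that must vanish at any common zero. Rewritten in
powers of `a - 2` it has only positive coefficients, so it is positive for all `a ≥ 2`. -/

namespace DecouplingCoefficients

variable {R : Type*}

section CommRing

variable [CommRing R]

def p₁ (a c : R) : R :=
  a ^ 5 * (7 * c - 16) + 5 * a ^ 4 * (13 * c - 64) + 15 * a ^ 3 * (9 * c - 88)
    + a ^ 2 * (560 - 185 * c) - 106 * a * (7 * c - 76) - 480 * c + 7440

def p₂ (a c : R) : R :=
  a ^ 5 * (13 * c - 40) + a ^ 4 * (70 * c - 556) + 25 * a ^ 3 * (5 * c - 68)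
    + 40 * a ^ 2 * (2 * c - 23) + 12 * a * (c + 70) - 144

def resultant (a : R) : R :=
  72 * a ^ 10 + 1212 * a ^ 9 + 11880 * a ^ 8 + 58200 * a ^ 7 + 104016 * a ^ 6
    - 54444 * a ^ 5 - 245760 * a ^ 4 + 257400 * a ^ 3 + 846912 * a ^ 2 + 385632 * a - 69120

/-- The multipliers are the coefficients of `c` in `p₂` and in `p₁`, so `c` cancels. -/
theorem resultant_eq (a c : R) :
    (13 * a ^ 5 + 70 * a ^ 4 + 125 * a ^ 3 + 80 * a ^ 2 + 12 * a) * p₁ a c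
      - (7 * a ^ 5 + 65 * a ^ 4 + 135 * a ^ 3 - 185 * a ^ 2 - 742 * a - 480) * p₂ a c
      = resultant a := by
  unfold p₁ p₂ resultant
  ring

theorem resultant_eq_zero_of_p₁_eq_zero_of_p₂_eq_zero {a c : R} (h₁ : p₁ a c = 0)
    (h₂ : p₂ a c = 0) : resultant a = 0 := by
  rw [← resultant_eq a c, h₁, h₂, mul_zero, mul_zero, sub_zero]

theorem resultant_add_two (b : R) :
    resultant (b + 2) =
      72 * b ^ 10 + 2652 * b ^ 9 + 46656 * b ^ 8 + 491928 * b ^ 7 + 3305760 * b ^ 6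
        + 14428788 * b ^ 5 + 40906824 * b ^ 4 + 74258712 * b ^ 3 + 83915088 * b ^ 2
        + 56013120 * b + 18316800 := by
  unfold resultant
  ring

theorem map_resultant {S : Type*} [CommRing S] (f : R →+* S) (a : R) :
    f (resultant a) = resultant (f a) := by
  simp [resultant, map_ofNat]

end CommRing

theorem resultant_pos [CommRing R] [LinearOrder R] [IsStrictOrderedRing R] {a : R}
    (ha : 2 ≤ a) : 0 < resultant a := by
  obtain ⟨b, hb, rfl⟩ : ∃ b, 0 ≤ b ∧ b + 2 = a := ⟨a - 2, sub_nonneg.2 ha, sub_add_cancel a 2⟩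
  rw [resultant_add_two]
  positivity

end DecouplingCoefficients

open DecouplingCoefficients in
theorem decoupling_coefficients_not_both_zero_even_general
    (a : ℤ) (ha : 2 ≤ a) (c : ℂ) :
    ¬(((a : ℂ) ^ 5 * (7 * c - 16) + 5 * (a : ℂ) ^ 4 * (13 * c - 64)
        + 15 * (a : ℂ) ^ 3 * (9 * c - 88) + (a : ℂ) ^ 2 * (560 - 185 * c)
        - 106 * (a : ℂ) * (7 * c - 76) - 480 * c + 7440 = 0) ∧
      ((a : ℂ) ^ 5 * (13 * c - 40) + (a : ℂ) ^ 4 * (70 * c - 556)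
        + 25 * (a : ℂ) ^ 3 * (5 * c - 68) + 40 * (a : ℂ) ^ 2 * (2 * c - 23)
        + 12 * (a : ℂ) * (c + 70) - 144 = 0)) := by
  rintro ⟨h₁, h₂⟩
  have hres : ((resultant a : ℤ) : ℂ) = 0 :=
    (map_resultant (Int.castRingHom ℂ) a).trans
      (resultant_eq_zero_of_p₁_eq_zero_of_p₂_eq_zero (c := c) h₁ h₂)
  exact (resultant_pos ha).ne' (Int.cast_eq_zero.1 hres)

/-- For every even integer `a ≥ 2` and every complex number `c`, the
polynomials `p₁(a,c)` and `p₂(a,c)` (coefficients of `W(a+5,0)` in the decoupling relations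
`C₁(a)`, `C₂(a)` for the orbifold `(V_c^{⊗2})^{S₂}`) do not vanish simultaneously. -/
theorem decoupling_coefficients_not_both_zero_even
    (a : ℤ) (ha : 2 ≤ a) (hae : Even a) (c : ℂ) :
    ¬(((a : ℂ) ^ 5 * (7 * c - 16) + 5 * (a : ℂ) ^ 4 * (13 * c - 64)
        + 15 * (a : ℂ) ^ 3 * (9 * c - 88) + (a : ℂ) ^ 2 * (560 - 185 * c)
        - 106 * (a : ℂ) * (7 * c - 76) - 480 * c + 7440 = 0) ∧
      ((a : ℂ) ^ 5 * (13 * c - 40) + (a : ℂ) ^ 4 * (70 * c - 556)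
        + 25 * (a : ℂ) ^ 3 * (5 * c - 68) + 40 * (a : ℂ) ^ 2 * (2 * c - 23)
        + 12 * (a : ℂ) * (c + 70) - 144 = 0)) :=
  decoupling_coefficients_not_both_zero_even_general a ha c
end

section
/- For every odd integer a ≥ 3 and every complex number c, the two complex numbers q₁(a,c) = a²(7c−16) + 6a(9c−32) + 80(c−7) and q₂(a,c) = a³(13c−40) + 12a²(5c−32) + 68a(c−10) + 336 are not both zero. -/
/-!
Both `q₁` and `q₂` are linear in `c`, so eliminating `c` from `q₁ = q₂ = 0` leaves their
resultant, which factors as `24 (a - 1)(a + 2)(a + 7)(a + 8)(3a + 10)`. Its only integer roots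
are `1, -2, -7, -8`, so it does not vanish for any integer `a ≥ 2`.
-/

section Resultant

variable {R : Type*} [CommRing R]

def decouplingCoeff₁ (a c : R) : R :=
  a ^ 2 * (7 * c - 16) + 6 * a * (9 * c - 32) + 80 * (c - 7)

def decouplingCoeff₂ (a c : R) : R :=
  a ^ 3 * (13 * c - 40) + 12 * a ^ 2 * (5 * c - 32) + 68 * a * (c - 10) + 336

theorem resultant_decouplingCoeff (a c : R) :
    (13 * a ^ 3 + 60 * a ^ 2 + 68 * a) * decouplingCoeff₁ a c
        - (7 * a ^ 2 + 54 * a + 80) * decouplingCoeff₂ a c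
      = 24 * ((a - 1) * (a + 2) * (a + 7) * (a + 8) * (3 * a + 10)) := by
  unfold decouplingCoeff₁ decouplingCoeff₂
  ring

end Resultant

theorem not_decouplingCoeff_eq_zero_and_eq_zero {K : Type*} [Field K] [CharZero K]
    (a : ℤ) (ha : 2 ≤ a) (c : K) :
    ¬(decouplingCoeff₁ (a : K) c = 0 ∧ decouplingCoeff₂ (a : K) c = 0) := by
  rintro ⟨h₁, h₂⟩
  have hpos : 0 < (a - 1) * (a + 2) * (a + 7) * (a + 8) * (3 * a + 10) :=
    mul_pos (mul_pos (mul_pos (mul_pos (by omega) (by omega)) (by omega)) (by omega)) (by omega)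
  have hres := resultant_decouplingCoeff (a : K) c
  rw [h₁, h₂, mul_zero, mul_zero, sub_zero, eq_comm, mul_eq_zero] at hres
  refine hres.elim (by norm_num) fun h ↦ hpos.ne' ?_
  exact_mod_cast h

theorem decoupling_coefficients_not_both_zero_odd_general
    (a : ℤ) (ha : 3 ≤ a) (c : ℂ) :
    ¬(((a : ℂ) ^ 2 * (7 * c - 16) + 6 * (a : ℂ) * (9 * c - 32) + 80 * (c - 7) = 0) ∧
      ((a : ℂ) ^ 3 * (13 * c - 40) + 12 * (a : ℂ) ^ 2 * (5 * c - 32)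
        + 68 * (a : ℂ) * (c - 10) + 336 = 0)) :=
  not_decouplingCoeff_eq_zero_and_eq_zero a (by omega) c

/-- For every odd integer `a ≥ 3` and every complex number `c`, the
polynomials `q₁(a,c)` and `q₂(a,c)` (coefficients of `W(a+5,0)` in the decoupling relations
`C₁(a)`, `C₂(a)` for the orbifold `(V_c^{⊗2})^{S₂}`, odd case) do not vanish
simultaneously. -/
theorem decoupling_coefficients_not_both_zero_odd
    (a : ℤ) (ha : 3 ≤ a) (hao : Odd a) (c : ℂ) :
    ¬(((a : ℂ) ^ 2 * (7 * c - 16) + 6 * (a : ℂ) * (9 * c - 32) + 80 * (c - 7) = 0) ∧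
      ((a : ℂ) ^ 3 * (13 * c - 40) + 12 * (a : ℂ) ^ 2 * (5 * c - 32)
        + 68 * (a : ℂ) * (c - 10) + 336 = 0)) :=
  decoupling_coefficients_not_both_zero_odd_general a ha c
end
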